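/- Let [w], [v] ∈ X be points of the Plücker quadric such that {k : w_k ≠ 0} = {k : v_k ≠ 0} and this common support is a proper subset of {0,1,2,3,4,5}. Then [w] and [v] lie in the same orbit of the (ℂ*)⁴-action on X. (Equivalently: every stratum of G₄,₂ whose admissible polytope is different from the hypersimplex Δ₄,₂ consists of a single (ℂ*)⁴-orbit.) -/

import Mathlib

/-- The weights of the `(ℂ*)⁴`-action on `ℂP⁵` coming from the second symmetric power:
`t` acts on homogeneous coordinates by multiplication by
`(t₁t₂, t₁t₃, t₁t₄, t₂t₃, t₂t₄, t₃t₄)`. -/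
def torusCoef (t : Fin 4 → ℂ) : Fin 6 → ℂ :=
  ![t 0 * t 1, t 0 * t 2, t 0 * t 3, t 1 * t 2, t 1 * t 3, t 2 * t 3]

/-!
The weight of the coordinate `w_k` is `e_i + e_j` for the `k`-th pair `{i, j} ⊆ {1,2,3,4}`, so the
complementary coordinates `(0,5)`, `(1,4)`, `(2,3)` all have total weight `e₁ + e₂ + e₃ + e₄`.
Consequently, the rescalings `λ · t` of the homogeneous coordinates are exactly the vectors
`c ∈ (ℂ*)⁶` with `c₀c₅ = c₁c₄ = c₂c₃`.

The Plücker relation is the linear relation `A + B = C` between `A = w₀w₅`, `B = w₂w₃`, `C = w₁w₄`.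
A zero coordinate forces one of `A, B, C` to vanish, and then `(A, B, C)` lies on a line; as the
supports of `w` and `v` agree, `(A', B', C') = μ (A, B, C)` for some `μ ≠ 0`. Splitting `μ` into
factors `c_i c_j = μ` with `v_i = c_i w_i` for each complementary pair gives the required rescaling.
-/

section Field

variable {K : Type*} [Field K]

theorem exists_ne_zero_eq_mul_of_eq_zero_iff {x x' : K} (hx : x = 0 ↔ x' = 0) :
    ∃ μ : K, μ ≠ 0 ∧ x' = μ * x := by
  by_cases h : x = 0
  · exact ⟨1, one_ne_zero, by rw [h, hx.mp h, mul_zero]⟩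
  · exact ⟨x' / x, div_ne_zero (mt hx.mpr h) h, (div_mul_cancel₀ x' h).symm⟩

theorem exists_eq_mul_of_add_eq {a b c a' b' c' : K} (h : a + b = c) (h' : a' + b' = c')
    (ha : a = 0 ↔ a' = 0) (hb : b = 0 ↔ b' = 0) (hc : c = 0 ↔ c' = 0)
    (hdeg : a = 0 ∨ b = 0 ∨ c = 0) :
    ∃ μ : K, μ ≠ 0 ∧ a' = μ * a ∧ b' = μ * b ∧ c' = μ * c := by
  rcases hdeg with h0 | h0 | h0
  · obtain ⟨μ, hμ, hb'⟩ := exists_ne_zero_eq_mul_of_eq_zero_iff hb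
    refine ⟨μ, hμ, by rw [h0, ha.mp h0, mul_zero], hb', ?_⟩
    rw [← h, ← h', h0, ha.mp h0, zero_add, zero_add, hb']
  · obtain ⟨μ, hμ, ha'⟩ := exists_ne_zero_eq_mul_of_eq_zero_iff ha
    refine ⟨μ, hμ, ha', by rw [h0, hb.mp h0, mul_zero], ?_⟩
    rw [← h, ← h', h0, hb.mp h0, add_zero, add_zero, ha']
  · obtain ⟨μ, hμ, ha'⟩ := exists_ne_zero_eq_mul_of_eq_zero_iff ha
    have hb' : b' = -a' := by linear_combination h' + hc.mp h0
    refine ⟨μ, hμ, ha', ?_, by rw [h0, hc.mp h0, mul_zero]⟩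
    rw [hb', ha']
    linear_combination -μ * h - μ * h0

theorem exists_mul_eq_of_mul_eq {x y x' y' μ : K} (hμ : μ ≠ 0)
    (hx : x = 0 ↔ x' = 0) (hy : y = 0 ↔ y' = 0) (h : x' * y' = μ * (x * y)) :
    ∃ p q : K, p ≠ 0 ∧ q ≠ 0 ∧ p * q = μ ∧ x' = p * x ∧ y' = q * y := by
  by_cases hx0 : x = 0
  · obtain ⟨q, hq, hy'⟩ := exists_ne_zero_eq_mul_of_eq_zero_iff hy
    refine ⟨μ / q, q, div_ne_zero hμ hq, hq, div_mul_cancel₀ μ hq, ?_, hy'⟩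
    rw [hx0, hx.mp hx0, mul_zero]
  · have hx' : x' ≠ 0 := mt hx.mpr hx0
    refine ⟨x' / x, μ / (x' / x), div_ne_zero hx' hx0,
      div_ne_zero hμ (div_ne_zero hx' hx0), mul_div_cancel₀ μ (div_ne_zero hx' hx0),
      (div_mul_cancel₀ x' hx0).symm, ?_⟩
    field_simp
    linear_combination h

end Field

theorem exists_torusCoef_eq {c : Fin 6 → ℂ} (hc : ∀ k, c k ≠ 0)
    (h05 : c 0 * c 5 = c 2 * c 3) (h14 : c 1 * c 4 = c 2 * c 3) :
    ∃ t : Fin 4 → ℂ, (∀ i, t i ≠ 0) ∧ ∃ lam : ℂ, lam ≠ 0 ∧ ∀ k, c k = lam * torusCoef t k := by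
  have h0 := hc 0
  have h1 := hc 1
  have h3 := hc 3
  -- `t₁ = 1`, and `λ t₂, λ t₃, λ t₄, λ t₂ t₃` are `c₀, c₁, c₂, c₃`.
  refine ⟨![1, c 3 / c 1, c 3 / c 0, c 2 * c 3 / (c 0 * c 1)], ?_, c 0 * c 1 / c 3, by simp [*], ?_⟩
  · intro i
    fin_cases i <;> simp [*]
  · intro k
    fin_cases k <;> simp [torusCoef] <;> field_simp
    · linear_combination h14
    · linear_combination h05

theorem degenerate_strata_are_single_orbits_general (w v : Fin 6 → ℂ)
    (hwq : w 0 * w 5 + w 2 * w 3 = w 1 * w 4)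
    (hvq : v 0 * v 5 + v 2 * v 3 = v 1 * v 4)
    (hsupp : ∀ k, w k ≠ 0 ↔ v k ≠ 0)
    (hproper : ∃ k, w k = 0) :
    ∃ t : Fin 4 → ℂ, (∀ i, t i ≠ 0) ∧
      ∃ lam : ℂ, lam ≠ 0 ∧ ∀ k : Fin 6, v k = lam * (torusCoef t k * w k) := by
  have hzero (k : Fin 6) : w k = 0 ↔ v k = 0 := not_iff_not.mp (hsupp k)
  have hprod (i j : Fin 6) : w i * w j = 0 ↔ v i * v j = 0 := by
    rw [mul_eq_zero, mul_eq_zero, hzero, hzero]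
  have hdeg : w 0 * w 5 = 0 ∨ w 2 * w 3 = 0 ∨ w 1 * w 4 = 0 := by
    obtain ⟨k, hk⟩ := hproper
    fin_cases k <;> simp_all
  obtain ⟨μ, hμ, h05, h23, h14⟩ :=
    exists_eq_mul_of_add_eq hwq hvq (hprod 0 5) (hprod 2 3) (hprod 1 4) hdeg
  obtain ⟨c0, c5, hc0, hc5, hμ05, hv0, hv5⟩ := exists_mul_eq_of_mul_eq hμ (hzero 0) (hzero 5) h05
  obtain ⟨c2, c3, hc2, hc3, hμ23, hv2, hv3⟩ := exists_mul_eq_of_mul_eq hμ (hzero 2) (hzero 3) h23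
  obtain ⟨c1, c4, hc1, hc4, hμ14, hv1, hv4⟩ := exists_mul_eq_of_mul_eq hμ (hzero 1) (hzero 4) h14
  obtain ⟨t, ht, lam, hlam, hc⟩ := exists_torusCoef_eq (c := ![c0, c1, c2, c3, c4, c5])
    (by intro k; fin_cases k <;> assumption) (hμ05.trans hμ23.symm) (hμ14.trans hμ23.symm)
  refine ⟨t, ht, lam, hlam, fun k => ?_⟩
  rw [← mul_assoc, ← hc k]
  fin_cases k <;> assumption

/-- two points `[w], [v]` of the Plücker quadric with the same support of
homogeneous coordinates, where this common support is a proper subset of `{0,…,5}`,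
lie in the same `(ℂ*)⁴`-orbit. (Same orbit in `ℂP⁵` means: some `t ∈ (ℂ*)⁴` carries a
representative of `[w]` to a representative of `[v]`.) -/
theorem degenerate_strata_are_single_orbits (w v : Fin 6 → ℂ)
    (hw : w ≠ 0) (hv : v ≠ 0)
    (hwq : w 0 * w 5 + w 2 * w 3 = w 1 * w 4)
    (hvq : v 0 * v 5 + v 2 * v 3 = v 1 * v 4)
    (hsupp : ∀ k, w k ≠ 0 ↔ v k ≠ 0)
    (hproper : ∃ k, w k = 0) :
    ∃ t : Fin 4 → ℂ, (∀ i, t i ≠ 0) ∧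
      ∃ lam : ℂ, lam ≠ 0 ∧ ∀ k : Fin 6, v k = lam * (torusCoef t k * w k) :=
  degenerate_strata_are_single_orbits_general w v hwq hvq hsupp hproper
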